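/- Suppose (g_α)_{α<ω₁} is a <*-increasing dominating scale in ω^ω: whenever α < β < ω₁ then g_α <* g_β, and for every f ∈ ω^ω there exists α < ω₁ with f <* g_α. Then for every Laver tree L, the set of branches [L] is not contained in ⋃_{α<ω₁} C_{g_α}. -/

import Mathlib

open scoped Ordinal

/-- The restriction `x↾n` of `x : ℕ → ℕ` to its first `n` values, as a finite sequence. -/
def res (x : ℕ → ℕ) (n : ℕ) : List ℕ := List.ofFn fun i : Fin n => x i

/-- A subtree of `ω^{<ω}`: a set of finite sequences closed under initial segments. -/
def IsSubtree (T : Set (List ℕ)) : Prop := ∀ s ∈ T, ∀ t : List ℕ, t <+: s → t ∈ T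

/-- `[T]`, the set of branches of a subtree `T`. -/
def branches (T : Set (List ℕ)) : Set (ℕ → ℕ) := {x | ∀ n, res x n ∈ T}

/-- A Laver tree: a (nonempty) subtree in which every node splits infinitely often. -/
def IsLaver (T : Set (List ℕ)) : Prop :=
  IsSubtree T ∧ [] ∈ T ∧ ∀ s ∈ T, {n : ℕ | s ++ [n] ∈ T}.Infinite

/-- `C_g`: the set of `f` with `f(n) ∈ {2g(n), 2g(n)+1}` for all `n`,
i.e. `f = 2g + x` for some `x ∈ 2^ω`. -/
def Cset (g : ℕ → ℕ) : Set (ℕ → ℕ) :=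
  {f | ∀ n, f n = 2 * g n ∨ f n = 2 * g n + 1}

/-- `f <* g`: eventual domination. -/
def EvLt (f g : ℕ → ℕ) : Prop := ∀ᶠ n in Filter.atTop, f n < g n

/-! Build two branches `x, y` of `L` level by level, letting `x` jump above `y` at even levels
and `y` jump above `x` at odd levels; this is possible since every node has infinitely many
children. Then `⌊x/2⌋` and `⌊y/2⌋` cross infinitely often. If `x ∈ C_{g_α}` and `y ∈ C_{g_β}`,
then `g_α = ⌊x/2⌋` and `g_β = ⌊y/2⌋`, but any two members of a `<*`-chain are eventually
comparable. -/

open Filter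

lemma res_succ (x : ℕ → ℕ) (n : ℕ) : res x (n + 1) = res x n ++ [x n] := by
  rw [res, List.ofFn_succ_last]
  rfl

lemma mem_branches_of_append {L : Set (List ℕ)} {x : ℕ → ℕ} {s : ℕ → List ℕ}
    (h0 : s 0 = []) (hs : ∀ n, s (n + 1) = s n ++ [x n]) (hL : ∀ n, s n ∈ L) :
    x ∈ branches L := by
  have hres : ∀ n, res x n = s n := by
    intro n
    induction n with
    | zero => simp [res, h0]
    | succ n ih => rw [res_succ, ih, hs]
  exact fun n => hres n ▸ hL n

section Laver

variable {L : Set (List ℕ)} {f : ℕ → ℕ}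

lemma IsLaver.exists_child_gt (hL : IsLaver L) (hf : Tendsto f atTop atTop) {s : List ℕ}
    (hs : s ∈ L) (c : ℕ) : ∃ m, s ++ [m] ∈ L ∧ c < f m :=
  ((Nat.frequently_atTop_iff_infinite.2 (hL.2.2 s hs)).and_eventually
    (hf.eventually_gt_atTop c)).exists

lemma IsLaver.exists_children_lt (hL : IsLaver L) (hf : Tendsto f atTop atTop) {s t : List ℕ}
    (hs : s ∈ L) (ht : t ∈ L) : ∃ a b, s ++ [a] ∈ L ∧ t ++ [b] ∈ L ∧ f b < f a := by
  obtain ⟨b, hb, -⟩ := hL.exists_child_gt hf ht 0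
  obtain ⟨a, ha, hab⟩ := hL.exists_child_gt hf hs (f b)
  exact ⟨a, b, ha, hb, hab⟩

lemma IsLaver.exists_alternating_branches (hL : IsLaver L) (hf : Tendsto f atTop atTop) :
    ∃ x ∈ branches L, ∃ y ∈ branches L,
      ∀ n, (Even n → f (y n) < f (x n)) ∧ (¬Even n → f (x n) < f (y n)) := by
  -- Membership in `L` is assumed after the witnesses so that `choose` gives total functions.
  have hstep : ∀ (n : ℕ) (p : List ℕ × List ℕ), ∃ a b, p.1 ∈ L → p.2 ∈ L →
      p.1 ++ [a] ∈ L ∧ p.2 ++ [b] ∈ L ∧ (Even n → f b < f a) ∧ (¬Even n → f a < f b) := by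
    intro n p
    by_cases hp : p.1 ∈ L ∧ p.2 ∈ L
    · by_cases hn : Even n
      · obtain ⟨a, b, ha, hb, hab⟩ := hL.exists_children_lt hf hp.1 hp.2
        exact ⟨a, b, fun _ _ => ⟨ha, hb, fun _ => hab, absurd hn⟩⟩
      · obtain ⟨b, a, hb, ha, hab⟩ := hL.exists_children_lt hf hp.2 hp.1
        exact ⟨a, b, fun _ _ => ⟨ha, hb, (absurd · hn), fun _ => hab⟩⟩
    · exact ⟨0, 0, fun h1 h2 => absurd ⟨h1, h2⟩ hp⟩
  choose a b hab using hstep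
  let nodes : ℕ → List ℕ × List ℕ :=
    fun n => Nat.rec ([], []) (fun k p => (p.1 ++ [a k p], p.2 ++ [b k p])) n
  have hnodes : ∀ n, (nodes n).1 ∈ L ∧ (nodes n).2 ∈ L := by
    intro n
    induction n with
    | zero => exact ⟨hL.2.1, hL.2.1⟩
    | succ n ih => exact ⟨(hab n _ ih.1 ih.2).1, (hab n _ ih.1 ih.2).2.1⟩
  refine ⟨fun n => a n (nodes n), mem_branches_of_append rfl (fun _ => rfl) (hnodes · |>.1),
    fun n => b n (nodes n), mem_branches_of_append rfl (fun _ => rfl) (hnodes · |>.2),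
    fun n => (hab n _ (hnodes n).1 (hnodes n).2).2.2⟩

lemma IsLaver.exists_branches_frequently_lt (hL : IsLaver L) (hf : Tendsto f atTop atTop) :
    ∃ x ∈ branches L, ∃ y ∈ branches L,
      (∃ᶠ n in atTop, f (y n) < f (x n)) ∧ ∃ᶠ n in atTop, f (x n) < f (y n) := by
  obtain ⟨x, hx, y, hy, hxy⟩ := hL.exists_alternating_branches hf
  refine ⟨x, hx, y, hy, frequently_atTop.2 fun N => ?_, frequently_atTop.2 fun N => ?_⟩
  · exact ⟨2 * N, by omega, (hxy _).1 (even_two_mul N)⟩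
  · exact ⟨2 * N + 1, by omega, (hxy _).2 (Nat.not_even_two_mul_add_one N)⟩

end Laver

lemma eq_div_two_of_mem_Cset {f g : ℕ → ℕ} (h : f ∈ Cset g) : g = fun n => f n / 2 :=
  funext fun n => by rcases h n with h | h <;> omega

lemma eventually_le_or_eventually_le {ι : Type*} [LinearOrder ι] {g : ι → ℕ → ℕ}
    (hmono : ∀ a b, a < b → EvLt (g a) (g b)) (a b : ι) :
    (∀ᶠ n in atTop, g a n ≤ g b n) ∨ ∀ᶠ n in atTop, g b n ≤ g a n := by
  rcases lt_trichotomy a b with hab | rfl | hab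
  · exact .inl ((hmono a b hab).mono fun _ => le_of_lt)
  · exact .inl (.of_forall fun _ => le_rfl)
  · exact .inr ((hmono b a hab).mono fun _ => le_of_lt)

theorem laver_not_covered_by_scale_general (g : {o : Ordinal // o < ω₁} → ℕ → ℕ)
    (hmono : ∀ a b : {o : Ordinal // o < ω₁}, a < b → EvLt (g a) (g b))
    (L : Set (List ℕ)) (hL : IsLaver L) :
    ¬ branches L ⊆ ⋃ a : {o : Ordinal // o < ω₁}, Cset (g a) := by
  intro hsub
  obtain ⟨x, hx, y, hy, hxy, hyx⟩ :=
    hL.exists_branches_frequently_lt (Nat.tendsto_div_const_atTop two_ne_zero)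
  obtain ⟨_, ⟨a, rfl⟩, hxa⟩ := hsub hx
  obtain ⟨_, ⟨b, rfl⟩, hyb⟩ := hsub hy
  rcases eventually_le_or_eventually_le hmono a b with hle | hle
  all_goals
    rw [eq_div_two_of_mem_Cset hxa, eq_div_two_of_mem_Cset hyb] at hle
  · exact hxy (hle.mono fun _ => not_lt.2)
  · exact hyx (hle.mono fun _ => not_lt.2)

theorem laver_not_covered_by_scale (g : {o : Ordinal // o < ω₁} → ℕ → ℕ)
    (hmono : ∀ a b : {o : Ordinal // o < ω₁}, a < b → EvLt (g a) (g b))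
    (hdom : ∀ f : ℕ → ℕ, ∃ a : {o : Ordinal // o < ω₁}, EvLt f (g a))
    (L : Set (List ℕ)) (hL : IsLaver L) :
    ¬ branches L ⊆ ⋃ a : {o : Ordinal // o < ω₁}, Cset (g a) :=
  laver_not_covered_by_scale_general g hmono L hL
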